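/- Let H ∈ (0, 1/2) and define K_H⁻¹ acting on absolutely continuous f by (K_H⁻¹ f)(s) = s^{H−1/2} I_{0+}^{1/2−H}( s^{1/2−H} f')(s), where I_{0+}^α is the left-sided Riemann–Liouville fractional integral. If |f'(u)| ≤ M for a.e. u ∈ [0,T], then ∫₀^T |(K_H⁻¹ f)(s)|² ds ≤ c · T² M² for a constant c depending only on universal quantities (not on H or T ≥ 1). -/

import Mathlib

open intervalIntegral

/-- The left-sided Riemann–Liouville fractional integral `I_{0+}^α`. -/
noncomputable def fracInt (α : ℝ) (g : ℝ → ℝ) (x : ℝ) : ℝ :=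
  (1 / Real.Gamma α) * ∫ y in (0:ℝ)..x, (x - y) ^ (α - 1) * g y

/-- The operator `K_H⁻¹` in the singular case `H < 1/2`, acting on an absolutely continuous
`f` with derivative `g = f'`: `(K_H⁻¹ f)(s) = s^{H-1/2} I_{0+}^{1/2-H}(u^{1/2-H} g(u))(s)`. -/
noncomputable def KHinvSing (H : ℝ) (g : ℝ → ℝ) (s : ℝ) : ℝ :=
  s ^ (H - 1/2) * fracInt (1/2 - H) (fun u => u ^ (1/2 - H) * g u) s

open MeasureTheory Set Real

/- The fractional integral `I_{0+}^α` of a function bounded by `C` on `(0, s]` is at most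
`C s^α / Γ(α + 1)`. With `α = 1/2 - H` the weight satisfies `u^α ≤ s^α`, and the outer factor
`s^{-α}` cancels one power of `s^α`, so `|(K_H⁻¹ f)(s)| ≤ M s^α / Γ(α + 1) ≤ 2 M s^α`.
Squaring and integrating over `[0, T]` gives at most `4 M² T^{2α+1} / (2α + 1) ≤ 4 M² T²`. -/

lemma Real.inv_Gamma_le_self {x : ℝ} (hx : 1 ≤ x) : (Gamma x)⁻¹ ≤ x := by
  have hΓ : 0 < Gamma x := Gamma_pos_of_pos (by linarith)
  have hmono : Gamma 2 ≤ Gamma (x + 1) :=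
    Gamma_strictMonoOn_Ici.monotoneOn (mem_Ici.2 le_rfl) (mem_Ici.2 (by linarith)) (by linarith)
  rw [Gamma_two, Gamma_add_one (by linarith)] at hmono
  rw [inv_le_iff_one_le_mul₀ hΓ]
  exact hmono

lemma integral_sub_rpow_sub_one {α : ℝ} (hα : 0 < α) (s : ℝ) :
    ∫ y in (0:ℝ)..s, (s - y) ^ (α - 1) = s ^ α / α := by
  rw [integral_comp_sub_left (fun y => y ^ (α - 1)), sub_self, sub_zero,
    integral_rpow (Or.inl (by linarith)), sub_add_cancel, zero_rpow hα.ne', sub_zero]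

lemma abs_fracInt_le {α s C : ℝ} {h : ℝ → ℝ} (hα : 0 < α) (hs : 0 ≤ s)
    (hh : ∀ᵐ y, y ∈ Ioc 0 s → |h y| ≤ C) :
    |fracInt α h s| ≤ C * s ^ α / Gamma (α + 1) := by
  have hΓ : 0 < Gamma α := Gamma_pos_of_pos hα
  have hkernel : ∀ᵐ y, y ∈ Ioc 0 s → ‖(s - y) ^ (α - 1) * h y‖ ≤ C * (s - y) ^ (α - 1) := by
    filter_upwards [hh] with y hy hmem
    rw [norm_mul, norm_of_nonneg (rpow_nonneg (sub_nonneg.2 hmem.2) _), mul_comm]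
    exact mul_le_mul_of_nonneg_right (hy hmem) (rpow_nonneg (sub_nonneg.2 hmem.2) _)
  have hint : IntervalIntegrable (fun y => C * (s - y) ^ (α - 1)) volume 0 s := by
    refine IntervalIntegrable.const_mul ?_ C
    simpa using ((intervalIntegrable_rpow' (a := 0) (b := s)
      (by linarith : (-1:ℝ) < α - 1)).comp_sub_left s).symm
  have hI := norm_integral_le_of_norm_le hs hkernel hint
  rw [intervalIntegral.integral_const_mul, integral_sub_rpow_sub_one hα] at hI
  rw [fracInt, abs_mul, abs_of_pos (one_div_pos.2 hΓ), Gamma_add_one hα.ne']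
  calc 1 / Gamma α * |∫ y in (0:ℝ)..s, (s - y) ^ (α - 1) * h y|
      ≤ 1 / Gamma α * (C * (s ^ α / α)) := by gcongr; exact hI
    _ = C * s ^ α / (α * Gamma α) := by field_simp

lemma abs_KHinvSing_le {H M s : ℝ} {g : ℝ → ℝ} (hH : H < 1/2) (hs : 0 < s)
    (hg : ∀ᵐ u, u ∈ Ioc 0 s → |g u| ≤ M) :
    |KHinvSing H g s| ≤ M * s ^ (1/2 - H) / Gamma (1/2 - H + 1) := by
  have hα : 0 < 1/2 - H := by linarith
  have hweighted : ∀ᵐ u, u ∈ Ioc 0 s → |u ^ (1/2 - H) * g u| ≤ M * s ^ (1/2 - H) := by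
    filter_upwards [hg] with u hu hmem
    rw [abs_mul, abs_of_nonneg (rpow_nonneg hmem.1.le _), mul_comm M]
    exact mul_le_mul (rpow_le_rpow hmem.1.le hmem.2 hα.le) (hu hmem) (abs_nonneg _)
      (rpow_nonneg hs.le _)
  have hcancel : s ^ (H - 1/2) * s ^ (1/2 - H) = 1 := by
    rw [← rpow_add hs, show H - 1/2 + (1/2 - H) = 0 by ring, rpow_zero]
  rw [KHinvSing, abs_mul, abs_of_pos (rpow_pos_of_pos hs _)]
  calc s ^ (H - 1/2) * |fracInt (1/2 - H) (fun u => u ^ (1/2 - H) * g u) s|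
      ≤ s ^ (H - 1/2) * (M * s ^ (1/2 - H) * s ^ (1/2 - H) / Gamma (1/2 - H + 1)) := by
        gcongr; exact abs_fracInt_le hα hs.le hweighted
    _ = M * s ^ (1/2 - H) * (s ^ (H - 1/2) * s ^ (1/2 - H)) / Gamma (1/2 - H + 1) := by ring
    _ = M * s ^ (1/2 - H) / Gamma (1/2 - H + 1) := by rw [hcancel, mul_one]

lemma sq_KHinvSing_le {H M s : ℝ} {g : ℝ → ℝ} (hH0 : 0 < H) (hH : H < 1/2) (hM : 0 ≤ M)
    (hs : 0 < s) (hg : ∀ᵐ u, u ∈ Ioc 0 s → |g u| ≤ M) :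
    KHinvSing H g s ^ 2 ≤ 4 * M ^ 2 * s ^ (1 - 2 * H) := by
  have hΓ : (Gamma (1/2 - H + 1))⁻¹ ≤ 2 := by
    linarith [inv_Gamma_le_self (by linarith : (1:ℝ) ≤ 1/2 - H + 1)]
  have hK : |KHinvSing H g s| ≤ 2 * M * s ^ (1/2 - H) :=
    calc |KHinvSing H g s| ≤ M * s ^ (1/2 - H) * (Gamma (1/2 - H + 1))⁻¹ :=
          abs_KHinvSing_le hH hs hg
      _ ≤ M * s ^ (1/2 - H) * 2 :=
          mul_le_mul_of_nonneg_left hΓ (mul_nonneg hM (rpow_nonneg hs.le _))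
      _ = 2 * M * s ^ (1/2 - H) := by ring
  rw [show 1 - 2 * H = (1/2 - H) * 2 by ring, rpow_mul hs.le, rpow_two, ← sq_abs]
  calc |KHinvSing H g s| ^ 2 ≤ (2 * M * s ^ (1/2 - H)) ^ 2 := by gcongr
    _ = 4 * M ^ 2 * (s ^ (1/2 - H)) ^ 2 := by ring

lemma integral_rpow_le_sq {T β : ℝ} (hT : 1 ≤ T) (hβ : 0 ≤ β) (hβ1 : β ≤ 1) :
    ∫ s in (0:ℝ)..T, s ^ β ≤ T ^ 2 := by
  rw [integral_rpow (Or.inl (by linarith)), zero_rpow (by linarith), sub_zero]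
  calc T ^ (β + 1) / (β + 1) ≤ T ^ (β + 1) :=
        div_le_self (rpow_nonneg (by linarith) _) (by linarith)
    _ ≤ T ^ (2:ℝ) := rpow_le_rpow_of_exponent_le hT (by linarith)
    _ = T ^ 2 := rpow_two T

/-- If `|f'| ≤ M` a.e. on `[0,T]` then `∫₀^T |(K_H⁻¹ f)(s)|² ds ≤ c T² M²` for a universal
constant `c` not depending on `H ∈ (0,1/2)` or `T ≥ 1`. -/
theorem KHinv_sq_integral_bound :
    ∃ c : ℝ, 0 < c ∧ ∀ (H T M : ℝ) (g : ℝ → ℝ), 0 < H → H < 1/2 → 1 ≤ T → 0 ≤ M →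
      (∀ᵐ u ∂(MeasureTheory.volume.restrict (Set.Icc (0:ℝ) T)), |g u| ≤ M) →
      (∫ s in (0:ℝ)..T, (KHinvSing H g s) ^ 2) ≤ c * T ^ 2 * M ^ 2 := by
  refine ⟨4, by norm_num, fun H T M g hH hH2 hT hM hg => ?_⟩
  rw [ae_restrict_iff' measurableSet_Icc] at hg
  have hpointwise : ∀ s ∈ Ioc 0 T, ‖KHinvSing H g s ^ 2‖ ≤ 4 * M ^ 2 * s ^ (1 - 2 * H) := by
    intro s hs
    rw [norm_of_nonneg (sq_nonneg _)]
    refine sq_KHinvSing_le hH hH2 hM hs.1 ?_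
    filter_upwards [hg] with u hu hmem
    exact hu ⟨hmem.1.le, hmem.2.trans hs.2⟩
  have hint : IntervalIntegrable (fun s => 4 * M ^ 2 * s ^ (1 - 2 * H)) volume 0 T :=
    (intervalIntegrable_rpow' (by linarith)).const_mul _
  calc ∫ s in (0:ℝ)..T, KHinvSing H g s ^ 2
      ≤ ‖∫ s in (0:ℝ)..T, KHinvSing H g s ^ 2‖ := le_abs_self _
    _ ≤ ∫ s in (0:ℝ)..T, 4 * M ^ 2 * s ^ (1 - 2 * H) :=
        norm_integral_le_of_norm_le (by linarith) (.of_forall hpointwise) hint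
    _ ≤ 4 * M ^ 2 * T ^ 2 := by
        rw [intervalIntegral.integral_const_mul]
        gcongr
        exact integral_rpow_le_sq hT (by linarith) (by linarith)
    _ = 4 * T ^ 2 * M ^ 2 := by ring
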